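/- Let q ≥ 2, let 𝒯 = {X_1 → expr_1, …, X_n → expr_n} be an SLP representing T with |T| ≥ q, and let X_i be a variable with a nonterminal rule and |val(X_i)| ≥ q. Then the number of positions u ∈ [1 : |T|-q+1] such that the node ξ(u, u+q-1) is labeled X_i equals vOcc(X_i) · (|t_i| - (q-1)). -/

import Mathlib

/-- A straight line program over alphabet `α`: variables are `Fin n` (variable
`X_i` of the paper corresponds to index `i-1`), each with either a terminal
rule (a single character) or a nonterminal rule `X_i → X_j X_k` with `j,k < i`. -/
structure SLP (α : Type) where
  n : ℕ
  npos : 0 < n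
  rule : Fin n → α ⊕ (Fin n × Fin n)
  wf : ∀ i jk, rule i = Sum.inr jk → jk.1 < i ∧ jk.2 < i

namespace SLP

variable {α : Type}

/-- the string `val(X_i)` derived by a variable -/
def val (S : SLP α) (i : Fin S.n) : List α :=
  match h : S.rule i with
  | Sum.inl a => [a]
  | Sum.inr jk =>
    have _h1 := (S.wf i jk h).1
    have _h2 := (S.wf i jk h).2
    S.val jk.1 ++ S.val jk.2
termination_by i.val

/-- the last variable `X_n` -/
def lastIdx (S : SLP α) : Fin S.n := ⟨S.n - 1, Nat.sub_lt S.npos Nat.one_pos⟩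

/-- the string `T` represented by the SLP -/
def text (S : SLP α) : List α := S.val S.lastIdx

/-- `T([i:j])`: the (1-based, inclusive) substring of a string -/
def substr (T : List α) (i j : ℕ) : List α := (T.drop (i - 1)).take (j + 1 - i)

/-- `pre(T,q)` -/
def spre (T : List α) (q : ℕ) : List α := T.take q

/-- `suf(T,q)` -/
def ssuf (T : List α) (q : ℕ) : List α := T.drop (T.length - q)

/-- `pre([b:e],q)` for intervals of positions -/
def ipre (b e q : ℕ) : Finset ℕ := Finset.Icc b (min (b + q - 1) e)

/-- `suf([b:e],q)` for intervals of positions -/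
def isuf (b e q : ℕ) : Finset ℕ := Finset.Icc (max b (e + 1 - q)) e

/-- `Occ(T,P)`: the set of (1-based) occurrences of `P` in `T` -/
def Occ [DecidableEq α] (T P : List α) : Finset ℕ :=
  (Finset.Icc 1 T.length).filter fun k => substr T k (k + P.length - 1) = P

/-- the multiset of labels of the nodes of the derivation tree rooted at
a node labeled `X_i` -/
def occsFrom (S : SLP α) (i : Fin S.n) : Multiset (Fin S.n) :=
  match h : S.rule i with
  | Sum.inl _ => {i}
  | Sum.inr jk =>
    have _h1 := (S.wf i jk h).1
    have _h2 := (S.wf i jk h).2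
    i ::ₘ (S.occsFrom jk.1 + S.occsFrom jk.2)
termination_by i.val

/-- `vOcc(X_i)`: the number of nodes of the derivation tree labeled `X_i` -/
def vOcc (S : SLP α) (i : Fin S.n) : ℕ := (S.occsFrom S.lastIdx).count i

/-- the string `t_i = suf(val(X_{ℓ(i)}),q-1) pre(val(X_{r(i)}),q-1)`
(and `[]` for a terminal rule) -/
def tstr (S : SLP α) (q : ℕ) (i : Fin S.n) : List α :=
  match S.rule i with
  | Sum.inl _ => []
  | Sum.inr jk => ssuf (S.val jk.1) (q - 1) ++ spre (S.val jk.2) (q - 1)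

/-- `label(X_i) = t_i([q:|t_i|])` -/
def labelStr (S : SLP α) (q : ℕ) (i : Fin S.n) : List α := (S.tstr q i).drop (q - 1)

/-- Nodes of the derivation tree are represented by the path from the root
(`false` = go to left child, `true` = go to right child).  `descend i p`
returns the label of the node reached from a node labeled `X_i` by path `p`. -/
def descend (S : SLP α) : Fin S.n → List Bool → Option (Fin S.n)
  | i, [] => some i
  | i, b :: p =>
    match S.rule i with
    | Sum.inl _ => none
    | Sum.inr jk => S.descend (if b then jk.2 else jk.1) p

/-- the label of the node of the derivation tree reached by path `p` from the root -/
def nodeVar (S : SLP α) (p : List Bool) : Option (Fin S.n) := S.descend S.lastIdx p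

/-- `p` is a valid node of the derivation tree -/
def IsNode (S : SLP α) (p : List Bool) : Prop := (S.nodeVar p).isSome

/-- the 0-based offset in `val(X_i)` of the part derived below path `p` -/
def offsetFrom (S : SLP α) : Fin S.n → List Bool → ℕ
  | _, [] => 0
  | i, b :: p =>
    match S.rule i with
    | Sum.inl _ => 0
    | Sum.inr jk =>
      if b then (S.val jk.1).length + S.offsetFrom jk.2 p
      else S.offsetFrom jk.1 p

/-- the 0-based offset in `T` of the interval derived by node `p` -/
def offset (S : SLP α) (p : List Bool) : ℕ := S.offsetFrom S.lastIdx p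

/-- `itv(v)`: the (1-based) interval of positions of `T` derived by node `p` -/
def itv (S : SLP α) (p : List Bool) : Finset ℕ :=
  match S.nodeVar p with
  | some i => Finset.Icc (S.offset p + 1) (S.offset p + (S.val i).length)
  | none => ∅

/-- `p = ξ(b,e)`: `p` is the deepest node whose interval contains `[b:e]`,
i.e. `itv(p) ⊇ [b:e]` and no proper descendant of `p` satisfies this. -/
def Stabs (S : SLP α) (p : List Bool) (b e : ℕ) : Prop :=
  S.IsNode p ∧ Finset.Icc b e ⊆ S.itv p ∧
  ∀ p' : List Bool, p <+: p' → p ≠ p' → S.IsNode p' → ¬ Finset.Icc b e ⊆ S.itv p'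

/-- `X_j` is a right `q`-gram neighbor of `X_i` -/
def RightNbr (S : SLP α) (q : ℕ) (i j : Fin S.n) : Prop :=
  i ≠ j ∧ ∃ u p p', 1 ≤ u ∧ u + q ≤ S.text.length ∧
    S.Stabs p u (u + q - 1) ∧ S.nodeVar p = some i ∧
    S.Stabs p' (u + 1) (u + q) ∧ S.nodeVar p' = some j

/-- `lm_q(X_i)`: the last variable of length `≥ q` on the sequence `i, ℓ(i), ℓ(ℓ(i)), …`
(meaningful when `|val(X_i)| ≥ q`) -/
def lm (S : SLP α) (q : ℕ) (i : Fin S.n) : Fin S.n :=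
  match h : S.rule i with
  | Sum.inl _ => i
  | Sum.inr jk =>
    have := (S.wf i jk h).1
    if (S.val jk.1).length < q then i else S.lm q jk.1
termination_by i.val

/-- `rm_q(X_i)`: the last variable of length `≥ q` on the sequence `i, r(i), r(r(i)), …` -/
def rm (S : SLP α) (q : ℕ) (i : Fin S.n) : Fin S.n :=
  match h : S.rule i with
  | Sum.inl _ => i
  | Sum.inr jk =>
    have := (S.wf i jk h).2
    if (S.val jk.2).length < q then i else S.rm q jk.2
termination_by i.val

/-- `lm_q` returning `null` (`none`) when `|val(X_i)| < q` -/
def lmOpt (S : SLP α) (q : ℕ) (i : Fin S.n) : Option (Fin S.n) :=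
  if (S.val i).length < q then none else some (S.lm q i)

/-- `rm_q` returning `null` (`none`) when `|val(X_i)| < q` -/
def rmOpt (S : SLP α) (q : ℕ) (i : Fin S.n) : Option (Fin S.n) :=
  if (S.val i).length < q then none else some (S.rm q i)

/-- `LSpine S i k`: `k` occurs in the sequence `i, ℓ(i), ℓ(ℓ(i)), …`
(the leftmost path of the derivation subtree rooted at a node labeled `X_i`) -/
inductive LSpine (S : SLP α) : Fin S.n → Fin S.n → Prop
  | refl (i : Fin S.n) : LSpine S i i
  | step {i k : Fin S.n} {jk : Fin S.n × Fin S.n} :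
      S.rule i = Sum.inr jk → LSpine S jk.1 k → LSpine S i k

end SLP

/-!
A node `v` labeled `X_i → X_j X_k` at offset `o` in `T` is `ξ(b,e)` exactly when `[b:e]` lies
inside `itv(v)` and straddles the boundary `o + |val(X_j)|` between the intervals of its two
children. Hence `v` is `ξ(u, u+q-1)` exactly for the `u` in a window of `|t_i| - (q-1)` consecutive
positions determined by `o`. Since `ξ(b,e)` is unique, the windows of different nodes are disjoint,
and there are `vOcc(X_i)` nodes labeled `X_i`.
-/

theorem List.exists_eq_append_cons_of_not_prefix {p p' : List Bool}
    (h : ¬ p <+: p') (h' : ¬ p' <+: p) :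
    ∃ (s r r' : List Bool) (b : Bool), p = s ++ b :: r ∧ p' = s ++ (!b) :: r' := by
  induction p generalizing p' with
  | nil => exact absurd List.nil_prefix h
  | cons x xs ih =>
    cases p' with
    | nil => exact absurd List.nil_prefix h'
    | cons y ys =>
      by_cases hxy : x = y
      · subst hxy
        obtain ⟨s, r, r', b, rfl, rfl⟩ :=
          ih (fun hp => h (List.cons_prefix_cons.mpr ⟨rfl, hp⟩))
            (fun hp => h' (List.cons_prefix_cons.mpr ⟨rfl, hp⟩))
        exact ⟨x :: s, r, r', b, rfl, rfl⟩
      · refine ⟨[], xs, ys, x, rfl, ?_⟩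
        cases x <;> cases y <;> simp_all

namespace SLP

variable {α : Type} (S : SLP α)

theorem val_of_rule_inr {k : Fin S.n} {jk : Fin S.n × Fin S.n} (h : S.rule k = Sum.inr jk) :
    S.val k = S.val jk.1 ++ S.val jk.2 := by
  rw [val]; split <;> simp_all

theorem length_tstr_of_rule_inr {k : Fin S.n} {jk : Fin S.n × Fin S.n}
    (h : S.rule k = Sum.inr jk) (q : ℕ) :
    (S.tstr q k).length = min (q - 1) (S.val jk.1).length + min (q - 1) (S.val jk.2).length := by
  simp only [tstr, h, ssuf, spre, List.length_append, List.length_drop, List.length_take]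
  omega

theorem descend_cons_of_rule_inr {k : Fin S.n} {jk : Fin S.n × Fin S.n}
    (h : S.rule k = Sum.inr jk) (b : Bool) (t : List Bool) :
    S.descend k (b :: t) = S.descend (if b then jk.2 else jk.1) t := by
  simp [descend, h]

theorem descend_append (k : Fin S.n) (p t : List Bool) :
    S.descend k (p ++ t) = (S.descend k p).bind fun m => S.descend m t := by
  induction p generalizing k with
  | nil => simp [descend]
  | cons b p ih => rcases h : S.rule k with a | jk <;> simp [descend, h, ih]

theorem offsetFrom_append {k m : Fin S.n} {p : List Bool} (h : S.descend k p = some m)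
    (t : List Bool) :
    S.offsetFrom k (p ++ t) = S.offsetFrom k p + S.offsetFrom m t := by
  induction p generalizing k with
  | nil => simp only [descend, Option.some.injEq] at h; subst h; simp [offsetFrom]
  | cons b p ih =>
    rcases hr : S.rule k with a | jk
    · simp [descend, hr] at h
    · rw [descend_cons_of_rule_inr S hr] at h
      cases b <;> simp only [Bool.false_eq_true, if_false, if_true] at h <;>
        simp [offsetFrom, hr, ih h, Nat.add_assoc]

theorem offsetFrom_add_length_le {k m : Fin S.n} {p : List Bool} (h : S.descend k p = some m) :
    S.offsetFrom k p + (S.val m).length ≤ (S.val k).length := by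
  induction p generalizing k with
  | nil => simp only [descend, Option.some.injEq] at h; subst h; simp [offsetFrom]
  | cons b p ih =>
    rcases hr : S.rule k with a | jk
    · simp [descend, hr] at h
    · rw [descend_cons_of_rule_inr S hr] at h
      rw [S.val_of_rule_inr hr, List.length_append]
      cases b <;> simp only [Bool.false_eq_true, if_false, if_true] at h <;>
        simp only [offsetFrom, hr, Bool.false_eq_true, if_false, if_true] <;>
        have := ih h <;> omega

section Nodes

variable {S}

theorem nodeVar_append (p t : List Bool) :
    S.nodeVar (p ++ t) = (S.nodeVar p).bind fun m => S.descend m t :=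
  S.descend_append _ p t

theorem offset_append {p : List Bool} {w : Fin S.n} (hp : S.nodeVar p = some w) (t : List Bool) :
    S.offset (p ++ t) = S.offset p + S.offsetFrom w t :=
  S.offsetFrom_append hp t

theorem offset_add_length_le {p : List Bool} {w : Fin S.n} (hp : S.nodeVar p = some w) :
    S.offset p + (S.val w).length ≤ S.text.length :=
  S.offsetFrom_add_length_le hp

theorem itv_of_nodeVar {p : List Bool} {w : Fin S.n} (hp : S.nodeVar p = some w) :
    S.itv p = Finset.Icc (S.offset p + 1) (S.offset p + (S.val w).length) := by
  rw [itv, hp]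

theorem exists_nodeVar_of_isNode_append {p t : List Bool} (h : S.IsNode (p ++ t)) :
    ∃ w, S.nodeVar p = some w := by
  rw [IsNode, nodeVar_append] at h
  exact Option.isSome_iff_exists.mp (Option.isSome_of_isSome_bind h)

theorem itv_subset_itv_of_prefix {p p' : List Bool} (h : p <+: p') (hp' : S.IsNode p') :
    S.itv p' ⊆ S.itv p := by
  obtain ⟨t, rfl⟩ := h
  obtain ⟨w, hw⟩ := exists_nodeVar_of_isNode_append hp'
  obtain ⟨m, hm⟩ := Option.isSome_iff_exists.mp hp'
  have hdesc : S.descend w t = some m := by rwa [nodeVar_append, hw, Option.bind_some] at hm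
  have hlen := S.offsetFrom_add_length_le hdesc
  rw [itv_of_nodeVar hw, itv_of_nodeVar hm, offset_append hw]
  exact Finset.Icc_subset_Icc (by omega) (by omega)

variable {p : List Bool} {w : Fin S.n} {jk : Fin S.n × Fin S.n}

theorem nodeVar_append_singleton (hp : S.nodeVar p = some w) (hr : S.rule w = Sum.inr jk)
    (b : Bool) : S.nodeVar (p ++ [b]) = some (if b then jk.2 else jk.1) := by
  rw [nodeVar_append, hp, Option.bind_some, S.descend_cons_of_rule_inr hr]
  rfl

theorem isNode_append_singleton (hp : S.nodeVar p = some w) (hr : S.rule w = Sum.inr jk)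
    (b : Bool) : S.IsNode (p ++ [b]) := by
  rw [IsNode, nodeVar_append_singleton hp hr]; rfl

theorem itv_append_false (hp : S.nodeVar p = some w) (hr : S.rule w = Sum.inr jk) :
    S.itv (p ++ [false]) = Finset.Icc (S.offset p + 1) (S.offset p + (S.val jk.1).length) := by
  rw [itv_of_nodeVar (nodeVar_append_singleton hp hr false), offset_append hp]
  simp [offsetFrom, hr]

theorem itv_append_true (hp : S.nodeVar p = some w) (hr : S.rule w = Sum.inr jk) :
    S.itv (p ++ [true]) =
      Finset.Icc (S.offset p + (S.val jk.1).length + 1) (S.offset p + (S.val w).length) := by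
  rw [itv_of_nodeVar (nodeVar_append_singleton hp hr true), offset_append hp,
    S.val_of_rule_inr hr]
  simp [offsetFrom, hr, Nat.add_assoc]

end Nodes

section Stabbing

variable {S}

theorem stabs_unique {p p' : List Bool} {b e : ℕ} (hbe : b ≤ e) (h : S.Stabs p b e)
    (h' : S.Stabs p' b e) : p = p' := by
  by_contra hne
  by_cases hpp' : p <+: p'
  · exact h.2.2 p' hpp' hne h'.1 h'.2.1
  by_cases hp'p : p' <+: p
  · exact h'.2.2 p hp'p (Ne.symm hne) h.1 h.2.1
  obtain ⟨s, r, r', c, rfl, rfl⟩ := List.exists_eq_append_cons_of_not_prefix hpp' hp'p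
  obtain ⟨w, hw⟩ := exists_nodeVar_of_isNode_append h.1
  obtain ⟨m, hm⟩ := Option.isSome_iff_exists.mp h.1
  obtain ⟨jk, hr⟩ : ∃ jk, S.rule w = Sum.inr jk := by
    rw [nodeVar_append, hw, Option.bind_some] at hm
    rcases hr : S.rule w with a | jk
    · simp [descend, hr] at hm
    · exact ⟨jk, rfl⟩
  -- `b` would lie in the intervals of both children of the node `s`
  have hb : b ∈ Finset.Icc b e := Finset.mem_Icc.mpr ⟨le_rfl, hbe⟩
  have hbc := itv_subset_itv_of_prefix (p := s ++ [c]) (by simp) h.1 (h.2.1 hb)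
  have hbc' := itv_subset_itv_of_prefix (p := s ++ [!c]) (by simp) h'.1 (h'.2.1 hb)
  cases c <;>
    simp only [Bool.not_false, Bool.not_true, itv_append_false hw hr, itv_append_true hw hr,
      Finset.mem_Icc] at hbc hbc' <;> omega

theorem stabs_iff_of_rule_inr {p : List Bool} {i : Fin S.n} {jk : Fin S.n × Fin S.n}
    (hp : S.nodeVar p = some i) (hr : S.rule i = Sum.inr jk) (b e : ℕ) :
    S.Stabs p b e ↔ S.offset p < b ∧ b ≤ S.offset p + (S.val jk.1).length ∧
      S.offset p + (S.val jk.1).length < e ∧ e ≤ S.offset p + (S.val i).length := by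
  have hleft := itv_append_false hp hr
  have hright := itv_append_true hp hr
  have hnode : S.IsNode p := by rw [IsNode, hp]; rfl
  constructor
  · rintro ⟨-, hsub, hdeepest⟩
    obtain ⟨x, hx, hxl⟩ := Finset.not_subset.mp <| hdeepest (p ++ [false])
      (List.prefix_append _ _) (by simp) (isNode_append_singleton hp hr false)
    obtain ⟨y, hy, hyr⟩ := Finset.not_subset.mp <| hdeepest (p ++ [true])
      (List.prefix_append _ _) (by simp) (isNode_append_singleton hp hr true)
    rw [Finset.mem_Icc] at hx hy
    have hbe : b ≤ e := hx.1.trans hx.2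
    have hb := hsub (Finset.mem_Icc.mpr ⟨le_rfl, hbe⟩)
    have he := hsub (Finset.mem_Icc.mpr ⟨hbe, le_rfl⟩)
    have hxp := hsub (Finset.mem_Icc.mpr hx)
    rw [hleft, Finset.mem_Icc] at hxl
    rw [hright, Finset.mem_Icc] at hyr
    rw [itv_of_nodeVar hp, Finset.mem_Icc] at hb he hxp
    omega
  · intro hbe
    refine ⟨hnode, ?_, ?_⟩
    · rw [itv_of_nodeVar hp]
      exact Finset.Icc_subset_Icc (by omega) (by omega)
    · rintro _ ⟨_ | ⟨c, t⟩, rfl⟩ hne hnode' hsub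
      · exact hne (List.append_nil p).symm
      -- a proper descendant lies below one child, which misses `e` or `b`
      have hchild := itv_subset_itv_of_prefix (p := p ++ [c]) (by simp) hnode'
      cases c
      · have := hchild (hsub (Finset.mem_Icc.mpr ⟨by omega, le_rfl⟩))
        rw [hleft, Finset.mem_Icc] at this
        omega
      · have := hchild (hsub (Finset.mem_Icc.mpr ⟨le_rfl, by omega⟩))
        rw [hright, Finset.mem_Icc] at this
        omega

theorem le_of_stabs_of_rule_inr {p : List Bool} {i : Fin S.n} {jk : Fin S.n × Fin S.n}
    (hp : S.nodeVar p = some i) (hr : S.rule i = Sum.inr jk) {b e : ℕ} (h : S.Stabs p b e) :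
    b ≤ e := by
  rw [stabs_iff_of_rule_inr hp hr] at h
  omega

theorem qgram_bounds_of_stabs {p : List Bool} {i : Fin S.n} {jk : Fin S.n × Fin S.n}
    (hp : S.nodeVar p = some i) (hr : S.rule i = Sum.inr jk) {q u : ℕ}
    (h : S.Stabs p u (u + q - 1)) : 1 ≤ u ∧ u + q ≤ S.text.length + 1 := by
  rw [stabs_iff_of_rule_inr hp hr] at h
  have := offset_add_length_le hp
  omega

variable (S) in
def qgramStarts (q : ℕ) (i j : Fin S.n) (p : List Bool) : Finset ℕ :=
  Finset.Icc (S.offset p + max ((S.val j).length + 2 - q) 1)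
    (S.offset p + min (S.val j).length ((S.val i).length + 1 - q))

theorem stabs_qgram_iff {p : List Bool} {i : Fin S.n} {jk : Fin S.n × Fin S.n}
    (hp : S.nodeVar p = some i) (hr : S.rule i = Sum.inr jk) (q u : ℕ) :
    S.Stabs p u (u + q - 1) ↔ u ∈ S.qgramStarts q i jk.1 p := by
  rw [stabs_iff_of_rule_inr hp hr, qgramStarts, Finset.mem_Icc]
  omega

theorem card_qgramStarts {i : Fin S.n} {jk : Fin S.n × Fin S.n} (hr : S.rule i = Sum.inr jk)
    (q : ℕ) (p : List Bool) :
    (S.qgramStarts q i jk.1 p).card = (S.tstr q i).length - (q - 1) := by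
  rw [qgramStarts, Nat.card_Icc, S.length_tstr_of_rule_inr hr, S.val_of_rule_inr hr,
    List.length_append]
  omega

end Stabbing

section Counting

def subtreeNodes (k : Fin S.n) : List (List Bool) :=
  match h : S.rule k with
  | Sum.inl _ => [[]]
  | Sum.inr jk =>
    have _h1 := (S.wf k jk h).1
    have _h2 := (S.wf k jk h).2
    [] :: ((subtreeNodes jk.1).map (List.cons false) ++ (subtreeNodes jk.2).map (List.cons true))
termination_by k.val

theorem subtreeNodes_of_rule_inl {k : Fin S.n} {a : α} (h : S.rule k = Sum.inl a) :
    S.subtreeNodes k = [[]] := by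
  rw [subtreeNodes]; split <;> simp_all

theorem subtreeNodes_of_rule_inr {k : Fin S.n} {jk : Fin S.n × Fin S.n}
    (h : S.rule k = Sum.inr jk) :
    S.subtreeNodes k = [] :: ((S.subtreeNodes jk.1).map (List.cons false) ++
      (S.subtreeNodes jk.2).map (List.cons true)) := by
  rw [subtreeNodes]; split <;> simp_all

theorem mem_subtreeNodes_iff (k : Fin S.n) (p : List Bool) :
    p ∈ S.subtreeNodes k ↔ (S.descend k p).isSome := by
  rcases h : S.rule k with a | jk
  · rw [S.subtreeNodes_of_rule_inl h]; cases p <;> simp [descend, h]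
  · have := S.wf k jk h
    rw [S.subtreeNodes_of_rule_inr h]
    cases p with
    | nil => simp [descend]
    | cons b p =>
      cases b <;>
        simp [descend, h, ← mem_subtreeNodes_iff jk.1 p, ← mem_subtreeNodes_iff jk.2 p]
termination_by k.val

theorem nodup_subtreeNodes (k : Fin S.n) : (S.subtreeNodes k).Nodup := by
  rcases h : S.rule k with a | jk
  · simp [S.subtreeNodes_of_rule_inl h]
  · have := S.wf k jk h
    rw [S.subtreeNodes_of_rule_inr h]
    refine List.nodup_cons.mpr ⟨by simp, List.Nodup.append ?_ ?_ ?_⟩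
    · exact (nodup_subtreeNodes jk.1).map List.cons_injective
    · exact (nodup_subtreeNodes jk.2).map List.cons_injective
    · intro x hx hy
      obtain ⟨_, _, rfl⟩ := List.mem_map.mp hx
      obtain ⟨_, _, hy⟩ := List.mem_map.mp hy
      simp at hy
termination_by k.val

theorem occsFrom_eq_filterMap (k : Fin S.n) :
    S.occsFrom k = ((S.subtreeNodes k).filterMap (S.descend k) : Multiset (Fin S.n)) := by
  rcases h : S.rule k with a | jk
  · rw [S.subtreeNodes_of_rule_inl h, occsFrom]; split <;> simp_all [descend]
  · have := S.wf k jk h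
    rw [S.subtreeNodes_of_rule_inr h, occsFrom]
    split <;> rename_i heq
    · simp_all
    · obtain rfl : jk = _ := Sum.inr.inj (h.symm.trans heq)
      rw [occsFrom_eq_filterMap jk.1, occsFrom_eq_filterMap jk.2]
      simp [descend, h, List.filterMap_map, Function.comp_def]
termination_by k.val

def labeledNodes (i : Fin S.n) : Finset (List Bool) :=
  ((S.subtreeNodes S.lastIdx).filter fun p => S.nodeVar p = some i).toFinset

theorem mem_labeledNodes {i : Fin S.n} {p : List Bool} :
    p ∈ S.labeledNodes i ↔ S.nodeVar p = some i := by
  simp only [labeledNodes, List.mem_toFinset, List.mem_filter, mem_subtreeNodes_iff,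
    decide_eq_true_eq, and_iff_right_iff_imp]
  intro hp
  rw [nodeVar] at hp
  simp [hp]

theorem card_labeledNodes (i : Fin S.n) : (S.labeledNodes i).card = S.vOcc i := by
  rw [labeledNodes, List.toFinset_card_of_nodup ((S.nodup_subtreeNodes _).filter _), vOcc,
    occsFrom_eq_filterMap, Multiset.coe_count, List.count_filterMap, List.countP_eq_length_filter]
  exact congrArg List.length (List.filter_congr fun p _ => (Bool.beq_eq_decide_eq _ _).symm)

end Counting

end SLP

theorem stmt14_general {α : Type} (q : ℕ) (S : SLP α)
    (i : Fin S.n) (jk : Fin S.n × Fin S.n)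
    (hr : S.rule i = Sum.inr jk) :
    Set.ncard {u : ℕ | 1 ≤ u ∧ u + q ≤ S.text.length + 1 ∧
        ∃ p : List Bool, S.Stabs p u (u + q - 1) ∧ S.nodeVar p = some i}
      = S.vOcc i * ((S.tstr q i).length - (q - 1)) := by
  classical
  have hset : {u : ℕ | 1 ≤ u ∧ u + q ≤ S.text.length + 1 ∧
      ∃ p : List Bool, S.Stabs p u (u + q - 1) ∧ S.nodeVar p = some i} =
      ↑((S.labeledNodes i).biUnion (S.qgramStarts q i jk.1)) := by
    ext u
    simp only [Set.mem_ofPred_eq, Finset.coe_biUnion, Finset.mem_coe, Set.mem_iUnion,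
      exists_prop, SLP.mem_labeledNodes]
    constructor
    · rintro ⟨-, -, p, hst, hp⟩
      exact ⟨p, hp, (SLP.stabs_qgram_iff hp hr q u).mp hst⟩
    · rintro ⟨p, hp, hu⟩
      have hst := (SLP.stabs_qgram_iff hp hr q u).mpr hu
      obtain ⟨hu1, huT⟩ := SLP.qgram_bounds_of_stabs hp hr hst
      exact ⟨hu1, huT, p, hst, hp⟩
  have hdisj : (S.labeledNodes i : Set (List Bool)).PairwiseDisjoint (S.qgramStarts q i jk.1) := by
    intro p hp p' hp' hne
    rw [Finset.mem_coe, SLP.mem_labeledNodes] at hp hp'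
    refine Finset.disjoint_left.mpr fun u hu hu' => hne ?_
    have hst := (SLP.stabs_qgram_iff hp hr q u).mpr hu
    exact SLP.stabs_unique (SLP.le_of_stabs_of_rule_inr hp hr hst) hst
      ((SLP.stabs_qgram_iff hp' hr q u).mpr hu')
  rw [hset, Set.ncard_coe_finset, Finset.card_biUnion hdisj,
    Finset.sum_congr rfl fun p _ => SLP.card_qgramStarts hr q p, Finset.sum_const, smul_eq_mul,
    S.card_labeledNodes]

/-- for a nonterminal variable `X_i` with `|val(X_i)| ≥ q`,
the number of positions `u ∈ [1:|T|-q+1]` whose `q`-gram `[u:u+q-1]` is stabbed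
by a node labeled `X_i` equals `vOcc(X_i)·(|t_i| - (q-1))`. -/
theorem stmt14 {α : Type} (q : ℕ) (hq : 2 ≤ q) (S : SLP α)
    (hT : q ≤ S.text.length)
    (i : Fin S.n) (jk : Fin S.n × Fin S.n)
    (hr : S.rule i = Sum.inr jk) (hi : q ≤ (S.val i).length) :
    Set.ncard {u : ℕ | 1 ≤ u ∧ u + q ≤ S.text.length + 1 ∧
        ∃ p : List Bool, S.Stabs p u (u + q - 1) ∧ S.nodeVar p = some i}
      = S.vOcc i * ((S.tstr q i).length - (q - 1)) :=
  stmt14_general q S i jk hr
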